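/- If Pr_T satisfies the rule Ros (T ⊢ ¬φ implies T ⊢ ¬Pr_T(⌜φ⌝)) and the principle C (T ⊢ Pr_T(⌜φ⌝) ∧ Pr_T(⌜ψ⌝) → Pr_T(⌜φ∧ψ⌝) for all φ, ψ), then T proves Con^S_T, i.e., T ⊢ Pr_T(⌜φ⌝) → ¬Pr_T(⌜¬φ⌝) for every formula φ. -/
import Mathlib

/-- If Pr_T satisfies the rule Ros (T ⊢ ¬φ implies T ⊢ ¬Pr_T(⌜φ⌝)) and the
principle C (T ⊢ Pr_T(⌜φ⌝) ∧ Pr_T(⌜ψ⌝) → Pr_T(⌜φ∧ψ⌝)), then T proves Con^S_T, i.e.,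
T ⊢ Pr_T(⌜φ⌝) → ¬Pr_T(⌜¬φ⌝) for every formula φ. Closure of T under classical
consequence is given by modus ponens, the law of non-contradiction, and a tautology
instance. -/
theorem stmt_1 {Sent : Type*}
    (T : Sent → Prop)
    (Imp And : Sent → Sent → Sent) (Not : Sent → Sent)
    (Pr : Sent → Sent)
    -- T is closed under logical consequence
    (mp : ∀ a b, T (Imp a b) → T a → T b)
    (taut : ∀ a b c, T (Imp (Imp (And a b) c) (Imp (Not c) (Imp a (Not b)))))
    (noncontra : ∀ φ, T (Not (And φ (Not φ))))
    -- D1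
    (D1 : ∀ φ, T φ → T (Pr φ))
    -- principle C
    (C : ∀ φ ψ, T (Imp (And (Pr φ) (Pr ψ)) (Pr (And φ ψ))))
    -- rule Ros
    (Ros : ∀ φ, T (Not φ) → T (Not (Pr φ)))
    -- T ⊢ Con^S_T
    : ∀ φ, T (Imp (Pr φ) (Not (Pr (Not φ)))) := by
  intro φ
  have h1 : T (Not (Pr (And φ (Not φ)))) := Ros _ (noncontra φ)
  have h2 := mp _ _ (taut (Pr φ) (Pr (Not φ)) (Pr (And φ (Not φ)))) (C φ (Not φ))
  exact mp _ _ h2 h1
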